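/- Let 1/2 ≤ λ ≤ 1. For every ρ₀ ∈ L₀(λ) and ρ₁ ∈ L₁(λ), the fidelity satisfies F(ρ₀, ρ₁) ≤ 2√(λ(1−λ)). Equivalently, F(L₀(λ), L₁(λ)) ≤ 2√(λ(1−λ)). -/

import Mathlib

open Matrix Kronecker ComplexOrder

noncomputable section

/-- |v⟩⟨v| : the rank-one outer product v v†. -/
def outer {n : Type*} (v : n → ℂ) : Matrix n n ℂ := Matrix.vecMulVec v (star v)

open Classical in
/-- Square root of a positive semidefinite matrix (junk value 0 if not PSD). -/
def psdSqrt {n : Type*} [Fintype n] [DecidableEq n] (A : Matrix n n ℂ) : Matrix n n ℂ :=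
  if h : A.PosSemidef then
    (h.1.eigenvectorUnitary : Matrix n n ℂ) * diagonal ((↑) ∘ Real.sqrt ∘ h.1.eigenvalues) *
      (star h.1.eigenvectorUnitary : Matrix n n ℂ)
  else 0

/-- |A| = √(A†A). -/
def matAbs {n : Type*} [Fintype n] [DecidableEq n] (A : Matrix n n ℂ) : Matrix n n ℂ :=
  psdSqrt (Aᴴ * A)

/-- Trace distance D(ρ,σ) = (1/2)·tr |σ - ρ|. -/
def trDist {n : Type*} [Fintype n] [DecidableEq n] (ρ σ : Matrix n n ℂ) : ℝ :=
  (1 / 2) * ((matAbs (σ - ρ)).trace).re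

/-- Fidelity F(ρ,σ) = tr √(√ρ · σ · √ρ). -/
def fid {n : Type*} [Fintype n] [DecidableEq n] (ρ σ : Matrix n n ℂ) : ℝ :=
  ((psdSqrt (psdSqrt ρ * σ * psdSqrt ρ)).trace).re

/-- F(ρ, S) : the maximal fidelity of ρ with members of the set S. -/
def fidSet {n : Type*} [Fintype n] [DecidableEq n]
    (ρ : Matrix n n ℂ) (S : Set (Matrix n n ℂ)) : ℝ :=
  sSup (fid ρ '' S)

/-- The states |φᵇ_c(λ)⟩ in ℂ². -/
def phi (b c : Fin 2) (lam : ℝ) : Fin 2 → ℂ :=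
  if b = 0 then
    (if c = 0 then ![(Real.sqrt lam : ℂ), (Real.sqrt (1 - lam) : ℂ)]
     else ![(Real.sqrt (1 - lam) : ℂ), -(Real.sqrt lam : ℂ)])
  else
    (if c = 0 then ![(Real.sqrt lam : ℂ), -(Real.sqrt (1 - lam) : ℂ)]
     else ![(Real.sqrt (1 - lam) : ℂ), (Real.sqrt lam : ℂ)])

/-- The ensemble L_c(λ) = { p|φ⁰_c⟩⟨φ⁰_c| + (1-p)|φ¹_c⟩⟨φ¹_c| : p ∈ [0,1] }. -/
def Lset (c : Fin 2) (lam : ℝ) : Set (Matrix (Fin 2) (Fin 2) ℂ) :=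
  {ρ | ∃ p : ℝ, 0 ≤ p ∧ p ≤ 1 ∧
      ρ = (p : ℂ) • outer (phi 0 c lam) + ((1 - p : ℝ) : ℂ) • outer (phi 1 c lam)}

/-- p_x^y = λ if x = y, 1 - λ otherwise. -/
def pbit (lam : ℝ) (x y : Fin 2) : ℝ := if x = y then lam else 1 - lam

/-- ρ_c = λ|c⟩⟨c| + (1-λ)|1-c⟩⟨1-c|. -/
def rhoC (lam : ℝ) (c : Fin 2) : Matrix (Fin 2) (Fin 2) ℂ :=
  (lam : ℂ) • outer (Pi.single c 1) + ((1 - lam : ℝ) : ℂ) • outer (Pi.single (1 - c) 1)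

/-- Tensor product of two vectors. -/
def vtens {m n : Type*} (v : m → ℂ) (w : n → ℂ) : m × n → ℂ := fun x => v x.1 * w x.2

end


lemma outer_posSemidef {n : Type*} [Fintype n] (v : n → ℂ) : (outer v).PosSemidef := by
  rw [outer]; exact posSemidef_vecMulVec_self_star v

lemma psdSqrt_spec {n : Type*} [Fintype n] [DecidableEq n] {A : Matrix n n ℂ}
    (hA : A.PosSemidef) : (psdSqrt A).PosSemidef ∧ psdSqrt A * psdSqrt A = A := by
  unfold psdSqrt
  rw [dif_pos hA]
  have hD : (diagonal (((↑) ∘ Real.sqrt ∘ hA.1.eigenvalues) : n → ℂ)).PosSemidef :=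
    PosSemidef.diagonal fun i => by
      simp only [Function.comp_apply, Pi.zero_apply]
      exact Complex.zero_le_real.mpr (Real.sqrt_nonneg _)
  refine ⟨?_, ?_⟩
  · have := hD.mul_mul_conjTranspose_same (hA.1.eigenvectorUnitary : Matrix n n ℂ)
    simpa [star_eq_conjTranspose] using this
  · have hU : (star hA.1.eigenvectorUnitary : Matrix n n ℂ) *
        (hA.1.eigenvectorUnitary : Matrix n n ℂ) = 1 := by
      simp
    have hDD : diagonal (((↑) ∘ Real.sqrt ∘ hA.1.eigenvalues) : n → ℂ) *
        diagonal (((↑) ∘ Real.sqrt ∘ hA.1.eigenvalues) : n → ℂ) =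
        diagonal (RCLike.ofReal ∘ hA.1.eigenvalues) := by
      rw [diagonal_mul_diagonal]
      congr 1; funext i
      simp only [Function.comp_apply]
      rw [← Complex.ofReal_mul, Real.mul_self_sqrt (hA.eigenvalues_nonneg i)]
      rfl
    conv_rhs => rw [hA.1.spectral_theorem]
    rw [Unitary.conjStarAlgAut_apply]
    calc _ = (hA.1.eigenvectorUnitary : Matrix n n ℂ) *
          (diagonal (((↑) ∘ Real.sqrt ∘ hA.1.eigenvalues) : n → ℂ) *
          ((star hA.1.eigenvectorUnitary : Matrix n n ℂ) *
            (hA.1.eigenvectorUnitary : Matrix n n ℂ)) *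
          diagonal (((↑) ∘ Real.sqrt ∘ hA.1.eigenvalues) : n → ℂ)) *
          (star hA.1.eigenvectorUnitary : Matrix n n ℂ) := by
          simp only [Matrix.mul_assoc]
      _ = _ := by rw [hU, Matrix.mul_one, hDD]

lemma smul_posSemidef {n : Type*} [Fintype n] {A : Matrix n n ℂ} (hA : A.PosSemidef) {c : ℝ}
    (hc : 0 ≤ c) : ((c:ℂ) • A).PosSemidef := by
  refine ⟨?_, fun x => ?_⟩
  · rw [Matrix.IsHermitian, conjTranspose_smul, hA.1.eq]
    simp [Complex.star_def, Complex.conj_ofReal]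
  · exact (hA.smul (by exact_mod_cast hc : (0:ℂ) ≤ (c:ℂ))).2 x

lemma fid_sq (ρ σ : Matrix (Fin 2) (Fin 2) ℂ) (hρ : ρ.PosSemidef) (hσ : σ.PosSemidef) :
    0 ≤ fid ρ σ ∧ ∃ d : ℝ, 0 ≤ d ∧ ((d:ℂ))^2 = ρ.det * σ.det ∧
      (fid ρ σ)^2 = ((ρ*σ).trace).re + 2*d := by
  set S := psdSqrt ρ with hS
  have hSps : S.PosSemidef := (psdSqrt_spec hρ).1
  have hSS : S * S = ρ := (psdSqrt_spec hρ).2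
  have hM : (S * σ * S).PosSemidef := by
    have h := hσ.conjTranspose_mul_mul_same S
    rwa [hSps.1] at h
  set T := psdSqrt (S * σ * S) with hT
  have hTps : T.PosSemidef := (psdSqrt_spec hM).1
  have hTT : T * T = S * σ * S := (psdSqrt_spec hM).2
  have hfid : fid ρ σ = (T.trace).re := rfl
  have h00 : T 0 0 = ((T 0 0).re : ℂ) := by
    have h := hTps.1.apply 0 0
    exact (Complex.conj_eq_iff_re.mp h).symm
  have h11 : T 1 1 = ((T 1 1).re : ℂ) := by
    have h := hTps.1.apply 1 1
    exact (Complex.conj_eq_iff_re.mp h).symm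
  have h10 : T 1 0 = starRingEnd ℂ (T 0 1) := by
    rw [← hTps.1.apply 0 1]; exact (Complex.conj_conj _).symm
  set r := (T 0 0).re
  set u := (T 1 1).re
  set N := Complex.normSq (T 0 1) with hN
  have hdiag : ∀ i : Fin 2, 0 ≤ T i i := by
    intro i
    exact hTps.diag_nonneg
  have hr : 0 ≤ r := by
    have := hdiag 0; rw [Complex.le_def] at this; exact this.1
  have hu : 0 ≤ u := by
    have := hdiag 1; rw [Complex.le_def] at this; exact this.1
  have htr : (T.trace).re = r + u := by
    rw [trace_fin_two]; simp [Complex.add_re]; rfl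
  have htr2 : ((ρ*σ).trace).re = r^2 + u^2 + 2*N := by
    have hc : (ρ*σ).trace = (T*T).trace := by
      rw [hTT, ← hSS, Matrix.trace_mul_cycle, Matrix.trace_mul_cycle σ S S]
    rw [hc, trace_fin_two]
    simp only [mul_apply, Fin.sum_univ_two, h10, h00, h11, Complex.mul_conj, Complex.mul_conj']
    simp only [hN, Complex.add_re, Complex.mul_re, Complex.ofReal_re, Complex.ofReal_im,
      Complex.conj_re, Complex.conj_im, Complex.normSq_apply]
    ring
  have hdetT : T.det = ((r*u - N : ℝ) : ℂ) := by
    rw [det_fin_two, h10, h00, h11]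
    rw [show T 0 1 * starRingEnd ℂ (T 0 1) = (N:ℂ) from Complex.mul_conj _]
    push_cast; ring
  have hdnn : 0 ≤ r*u - N := by
    have h := hTps.1.det_eq_prod_eigenvalues
    rw [hdetT] at h
    have h2 : r*u - N = ∏ i, hTps.1.eigenvalues i := by
      have h3 : ((r*u - N : ℝ):ℂ) = ((∏ i, hTps.1.eigenvalues i : ℝ):ℂ) := by
        push_cast at h ⊢; exact h
      exact_mod_cast h3
    rw [h2]
    exact Finset.prod_nonneg fun i _ => hTps.eigenvalues_nonneg i
  refine ⟨by rw [hfid, htr]; positivity, r*u - N, hdnn, ?_, ?_⟩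
  · have h4 : (((r*u - N : ℝ)):ℂ)^2 = T.det * T.det := by rw [hdetT]; ring
    rw [h4, ← det_mul, hTT, det_mul, det_mul, ← hSS, det_mul]
    ring
  · rw [hfid, htr, htr2]; ring

lemma L0_eq (lam p : ℝ) (h0 : 0 ≤ lam) (h1 : lam ≤ 1) :
    (p:ℂ) • outer (phi 0 0 lam) + ((1-p:ℝ):ℂ) • outer (phi 1 0 lam) =
    !![(lam:ℂ), (((2*p-1) * (Real.sqrt lam * Real.sqrt (1-lam)) : ℝ):ℂ);
       (((2*p-1) * (Real.sqrt lam * Real.sqrt (1-lam)) : ℝ):ℂ), ((1-lam : ℝ):ℂ)] := by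
  have ha : (Real.sqrt lam : ℂ) * Real.sqrt lam = (lam:ℂ) := by
    exact_mod_cast congrArg (fun x : ℝ => (x:ℂ)) (Real.mul_self_sqrt h0)
  have hb : (Real.sqrt (1-lam) : ℂ) * Real.sqrt (1-lam) = 1 - (lam:ℂ) := by
    rw [← Complex.ofReal_mul, Real.mul_self_sqrt (by linarith : (0:ℝ) ≤ 1 - lam)]
    push_cast; ring
  ext i j
  fin_cases i <;> fin_cases j <;>
    simp [outer, phi, vecMulVec_apply, Pi.star_apply, Complex.star_def,
      Complex.conj_ofReal, -cons_vecMulVec, -vecMulVec_cons] <;>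
    push_cast <;>
    first
      | linear_combination ha
      | linear_combination hb
      | ring

lemma L1_eq (lam p : ℝ) (h0 : 0 ≤ lam) (h1 : lam ≤ 1) :
    (p:ℂ) • outer (phi 0 1 lam) + ((1-p:ℝ):ℂ) • outer (phi 1 1 lam) =
    !![((1-lam : ℝ):ℂ), (((1-2*p) * (Real.sqrt lam * Real.sqrt (1-lam)) : ℝ):ℂ);
       (((1-2*p) * (Real.sqrt lam * Real.sqrt (1-lam)) : ℝ):ℂ), (lam:ℂ)] := by
  have ha : (Real.sqrt lam : ℂ) * Real.sqrt lam = (lam:ℂ) := by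
    exact_mod_cast congrArg (fun x : ℝ => (x:ℂ)) (Real.mul_self_sqrt h0)
  have hb : (Real.sqrt (1-lam) : ℂ) * Real.sqrt (1-lam) = 1 - (lam:ℂ) := by
    rw [← Complex.ofReal_mul, Real.mul_self_sqrt (by linarith : (0:ℝ) ≤ 1 - lam)]
    push_cast; ring
  ext i j
  fin_cases i <;> fin_cases j <;>
    simp [outer, phi, vecMulVec_apply, Pi.star_apply, Complex.star_def,
      Complex.conj_ofReal, -cons_vecMulVec, -vecMulVec_cons] <;>
    push_cast <;>
    first
      | linear_combination ha
      | linear_combination hb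
      | ring

set_option maxHeartbeats 1000000 in
/-- For 1/2 ≤ λ ≤ 1 and all ρ₀ ∈ L₀(λ), ρ₁ ∈ L₁(λ), F(ρ₀,ρ₁) ≤ 2√(λ(1-λ));
equivalently, F(L₀(λ), L₁(λ)) ≤ 2√(λ(1-λ)). -/
theorem stmt4 (lam : ℝ) (h0 : 1 / 2 ≤ lam) (h1 : lam ≤ 1) :
    (∀ ρ₀ ∈ Lset 0 lam, ∀ ρ₁ ∈ Lset 1 lam,
        fid ρ₀ ρ₁ ≤ 2 * Real.sqrt (lam * (1 - lam))) ∧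
    sSup {x : ℝ | ∃ ρ₀ ∈ Lset 0 lam, ∃ ρ₁ ∈ Lset 1 lam, x = fid ρ₀ ρ₁} ≤
      2 * Real.sqrt (lam * (1 - lam)) := by
  have hL0 : (0:ℝ) ≤ lam := by linarith
  have hL1 : (0:ℝ) ≤ 1 - lam := by linarith
  have hLL : (0:ℝ) ≤ lam * (1 - lam) := mul_nonneg hL0 hL1
  have hB : (0:ℝ) ≤ 2 * Real.sqrt (lam * (1 - lam)) := by positivity
  have main : ∀ ρ₀ ∈ Lset 0 lam, ∀ ρ₁ ∈ Lset 1 lam,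
      fid ρ₀ ρ₁ ≤ 2 * Real.sqrt (lam * (1 - lam)) := by
    rintro ρ₀ ⟨p, hp0, hp1, rfl⟩ ρ₁ ⟨q, hq0, hq1, rfl⟩
    have hps₀ : ((p:ℂ) • outer (phi 0 0 lam) + ((1-p:ℝ):ℂ) • outer (phi 1 0 lam)).PosSemidef :=
      (smul_posSemidef (outer_posSemidef _) hp0).add
        (smul_posSemidef (outer_posSemidef _) (by linarith))
    have hps₁ : ((q:ℂ) • outer (phi 0 1 lam) + ((1-q:ℝ):ℂ) • outer (phi 1 1 lam)).PosSemidef :=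
      (smul_posSemidef (outer_posSemidef _) hq0).add
        (smul_posSemidef (outer_posSemidef _) (by linarith))
    obtain ⟨hfnn, d, hd0, hdet, hfsq⟩ := fid_sq _ _ hps₀ hps₁
    rw [L0_eq lam p hL0 h1, L1_eq lam q hL0 h1] at hdet hfsq hfnn ⊢
    set s := 2*p - 1 with hs
    set t := 1 - 2*q with ht
    set cc := Real.sqrt lam * Real.sqrt (1-lam) with hcc
    have hc2 : cc * cc = lam * (1-lam) := by
      rw [hcc, mul_mul_mul_comm, Real.mul_self_sqrt hL0, Real.mul_self_sqrt hL1]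
    have hc2c : (cc:ℂ) * cc = (lam:ℂ) * (1 - lam) := by
      have := congrArg (fun x : ℝ => (x:ℂ)) hc2
      push_cast at this; exact this
    have hdet0 : (!![(lam:ℂ), ((s*cc:ℝ):ℂ); ((s*cc:ℝ):ℂ), ((1-lam:ℝ):ℂ)]).det
        = ((lam*(1-lam)*(1-s^2) : ℝ):ℂ) := by
      rw [det_fin_two_of]; push_cast
      linear_combination (-(s:ℂ)^2) * hc2c
    have hdet1 : (!![((1-lam:ℝ):ℂ), ((t*cc:ℝ):ℂ); ((t*cc:ℝ):ℂ), (lam:ℂ)]).det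
        = ((lam*(1-lam)*(1-t^2) : ℝ):ℂ) := by
      rw [det_fin_two_of]; push_cast
      linear_combination (-(t:ℂ)^2) * hc2c
    rw [hdet0, hdet1, ← Complex.ofReal_mul] at hdet
    have hdsq : d^2 = (lam*(1-lam)*(1-s^2)) * (lam*(1-lam)*(1-t^2)) := by
      exact_mod_cast hdet
    have htrace : ((!![(lam:ℂ), ((s*cc:ℝ):ℂ); ((s*cc:ℝ):ℂ), ((1-lam:ℝ):ℂ)] *
        !![((1-lam:ℝ):ℂ), ((t*cc:ℝ):ℂ); ((t*cc:ℝ):ℂ), (lam:ℂ)]).trace).re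
        = 2*(lam*(1-lam)) + 2*(s*t)*(lam*(1-lam)) := by
      have h : (!![(lam:ℂ), ((s*cc:ℝ):ℂ); ((s*cc:ℝ):ℂ), ((1-lam:ℝ):ℂ)] *
          !![((1-lam:ℝ):ℂ), ((t*cc:ℝ):ℂ); ((t*cc:ℝ):ℂ), (lam:ℂ)]).trace
          = ((lam*(1-lam) + s*cc*(t*cc) + (s*cc*(t*cc) + (1-lam)*lam) : ℝ):ℂ) := by
        rw [trace_fin_two]
        simp [mul_apply, Fin.sum_univ_two]
      rw [h, Complex.ofReal_re]
      linear_combination (2*s*t) * hc2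
    have hs1 : s^2 ≤ 1 := by nlinarith
    have ht1 : t^2 ≤ 1 := by nlinarith
    have hst : s*t ≤ 1 := by nlinarith [sq_nonneg (s-t), sq_nonneg (s+t)]
    have hrhsnn : (0:ℝ) ≤ lam*(1-lam)*(1-s*t) := mul_nonneg hLL (by linarith)
    have hdle : d ≤ lam*(1-lam)*(1-s*t) := by
      have h2 : d^2 ≤ (lam*(1-lam)*(1-s*t))^2 := by
        nlinarith [mul_nonneg (sq_nonneg (lam*(1-lam))) (sq_nonneg (s-t))]
      exact (pow_le_pow_iff_left₀ hd0 hrhsnn two_ne_zero).mp h2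
    have hsq4 : (2*Real.sqrt (lam*(1-lam)))^2 = 4*(lam*(1-lam)) := by
      rw [mul_pow, Real.sq_sqrt hLL]; ring
    have hfle : (fid (!![(lam:ℂ), ((s*cc:ℝ):ℂ); ((s*cc:ℝ):ℂ), ((1-lam:ℝ):ℂ)])
        (!![((1-lam:ℝ):ℂ), ((t*cc:ℝ):ℂ); ((t*cc:ℝ):ℂ), (lam:ℂ)]))^2
        ≤ (2*Real.sqrt (lam*(1-lam)))^2 := by
      rw [hfsq, htrace, hsq4]; nlinarith [hdle]
    exact (pow_le_pow_iff_left₀ hfnn hB two_ne_zero).mp hfle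
  refine ⟨main, Real.sSup_le ?_ hB⟩
  rintro x ⟨ρ₀, h₀, ρ₁, h₁, rfl⟩
  exact main ρ₀ h₀ ρ₁ h₁
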